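/- Let G be a graph, and suppose the binary relation 'u has an escape path to w or u = w' is considered on V(G). For every vertex v of a caterpillar, either v is a leaf or there is an escape path from v to a leaf; hence for each k, max over vertices v of |I^k(v)| is attained at a leaf. -/

import Mathlib

open scoped Classical

variable {V : Type*}

/-- `P = p 1, p 2, …, p n` is an escape path in `G` (from `p 1` to `p n`):
a path in `G` whose last vertex `p n` has degree 1 and whose vertices
`p i` for `2 ≤ i ≤ n - 2` have degree 2. -/
def IsEscapePath [Fintype V] (G : SimpleGraph V) (n : ℕ) (p : ℕ → V) : Prop :=
  1 ≤ n ∧ Set.InjOn p (Set.Icc 1 n) ∧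
  (∀ i, 1 ≤ i → i < n → G.Adj (p i) (p (i + 1))) ∧
  G.degree (p n) = 1 ∧
  ∀ i, 2 ≤ i → i ≤ n - 2 → G.degree (p i) = 2

/-- The flip of the path `p 1, …, p n`: it maps `p i` to `p (n + 1 - i)` and
fixes every vertex outside the path. -/
noncomputable def flipP (n : ℕ) (p : ℕ → V) : V → V := fun x =>
  if h : ∃ i, 1 ≤ i ∧ i ≤ n ∧ p i = x then p (n + 1 - h.choose) else x

/-- `s` is an independent set of `G`. -/
def IndepSet (G : SimpleGraph V) (s : Set V) : Prop :=
  ∀ x ∈ s, ∀ y ∈ s, x ≠ y → ¬ G.Adj x y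

/-- The star `I^k_G(u)`: the family of independent `k`-subsets of `G`
containing the vertex `u`. -/
noncomputable def star [Fintype V] (G : SimpleGraph V) (k : ℕ) (u : V) :
    Finset (Finset V) :=
  Finset.univ.filter
    (fun A : Finset V => A.card = k ∧ u ∈ A ∧
      ∀ x ∈ A, ∀ y ∈ A, x ≠ y → ¬ G.Adj x y)

/-- A caterpillar: a finite tree (on at least two vertices) such that deleting all
leaves (vertices of degree 1) and their incident edges yields a path graph. -/
def IsCaterpillar [Fintype V] (G : SimpleGraph V) : Prop :=
  G.IsTree ∧ 2 ≤ Fintype.card V ∧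
    ∃ m : ℕ,
      Nonempty ((G.induce {v : V | G.degree v ≠ 1}) ≃g SimpleGraph.pathGraph m)

/-!
Reflecting an escape path `v = p 1, …, p n = ℓ` end to end (the map `flipP`) sends every
independent set containing `v` to an independent set containing `ℓ`: the vertices `p 2, …, p n`
other than `p (n - 1)` only see their path neighbours, and the two edges the reflection could
create, at `p 1` and at `p (n - 1)`, are excluded because `v` lies in the set and hence `p 2`
does not. So `|I^k(v)| ≤ |I^k(ℓ)|`, and a maximiser of `|I^k(·)|` can be moved to a leaf.

In a caterpillar every non-leaf `v` lies on the spine. Walk along the spine from `v` towards its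
last vertex, which carries a pendant leaf since it has degree at least 2 but at most one spine
neighbour; every spine vertex strictly before the first one carrying a pendant leaf has degree 2,
so stopping there and stepping to the leaf gives an escape path.
-/

namespace SimpleGraph

open Finset

variable [Fintype V] {G : SimpleGraph V}

theorem eq_of_adj_of_degree_eq_one {u w x : V} (hu : G.degree u = 1) (hw : G.Adj u w)
    (hx : G.Adj u x) : x = w :=
  (degree_eq_one_iff_existsUnique_adj.mp hu).unique hx hw

theorem eq_or_eq_of_adj_of_degree_eq_two {u w w' x : V} (hu : G.degree u = 2)
    (hw : G.Adj u w) (hw' : G.Adj u w') (hne : w ≠ w') (hx : G.Adj u x) : x = w ∨ x = w' := by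
  have hsub : ({w, w'} : Finset V) ⊆ G.neighborFinset u := by
    simp [insert_subset_iff, hw, hw']
  have heq := eq_of_subset_of_card_le hsub
    (by rw [card_pair hne, card_neighborFinset_eq_degree, hu])
  have hx' : x ∈ G.neighborFinset u := (G.mem_neighborFinset u x).mpr hx
  rw [← heq] at hx'
  simpa using hx'

theorem degree_eq_degree_induce_add (s : Set V) [DecidablePred (· ∈ s)] (v : s) :
    G.degree v = (G.induce s).degree v + #{w ∈ G.neighborFinset v | w ∉ s} := by
  rw [← card_neighborFinset_eq_degree, ← card_neighborFinset_eq_degree,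
    ← card_map (.subtype (· ∈ s)), map_neighborFinset_induce,
    ← card_filter_add_card_filter_not (p := (· ∈ s))]
  congr 2
  ext; simp

theorem degree_pathGraph_eq_two {m : ℕ} (j : Fin m) (h0 : 0 < j.val) (h1 : j.val + 1 < m) :
    (pathGraph m).degree j = 2 := by
  rw [← card_neighborFinset_eq_degree, card_eq_two]
  refine ⟨⟨j - 1, by omega⟩, ⟨j + 1, h1⟩, by simp [Fin.ext_iff], ?_⟩
  ext k
  simp only [mem_neighborFinset, pathGraph_adj, mem_insert, mem_singleton, Fin.ext_iff]
  omega

theorem degree_pathGraph_le_one_of_last {m : ℕ} (j : Fin m) (h : j.val + 1 = m) :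
    (pathGraph m).degree j ≤ 1 := by
  rw [← card_neighborFinset_eq_degree, card_le_one]
  intro a ha b hb
  simp only [mem_neighborFinset, pathGraph_adj] at ha hb
  omega

end SimpleGraph

section Flip

variable {n : ℕ} {p : ℕ → V}

theorem flipP_apply_of_injOn (hinj : Set.InjOn p (Set.Icc 1 n)) {i : ℕ} (hi : i ∈ Set.Icc 1 n) :
    flipP n p (p i) = p (n + 1 - i) := by
  have hex : ∃ j, 1 ≤ j ∧ j ≤ n ∧ p j = p i := ⟨i, hi.1, hi.2, rfl⟩
  obtain ⟨h1, h2, h3⟩ := hex.choose_spec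
  rw [flipP, dif_pos hex, hinj ⟨h1, h2⟩ hi h3]

theorem flipP_apply_of_notMem {x : V} (hx : x ∉ p '' Set.Icc 1 n) : flipP n p x = x := by
  rw [flipP, dif_neg]
  rintro ⟨i, h1, h2, rfl⟩
  exact hx ⟨i, ⟨h1, h2⟩, rfl⟩

theorem flipP_involutive (hinj : Set.InjOn p (Set.Icc 1 n)) :
    Function.Involutive (flipP n p) := by
  intro x
  by_cases hx : x ∈ p '' Set.Icc 1 n
  · obtain ⟨i, ⟨hi1, hin⟩, rfl⟩ := hx
    rw [flipP_apply_of_injOn hinj ⟨hi1, hin⟩, flipP_apply_of_injOn hinj ⟨by omega, by omega⟩,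
      Nat.sub_sub_self (by omega)]
  · rw [flipP_apply_of_notMem hx, flipP_apply_of_notMem hx]

end Flip

namespace IsEscapePath

open SimpleGraph Finset

variable [Fintype V] {G : SimpleGraph V} {n : ℕ} {p : ℕ → V}

theorem one_le (h : IsEscapePath G n p) : 1 ≤ n := h.1

theorem injOn (h : IsEscapePath G n p) : Set.InjOn p (Set.Icc 1 n) := h.2.1

theorem adj_succ (h : IsEscapePath G n p) {i : ℕ} (h1 : 1 ≤ i) (hi : i < n) :
    G.Adj (p i) (p (i + 1)) :=
  h.2.2.1 i h1 hi

theorem degree_last (h : IsEscapePath G n p) : G.degree (p n) = 1 := h.2.2.2.1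

theorem degree_eq_two (h : IsEscapePath G n p) {i : ℕ} (hi2 : 2 ≤ i) (hi : i ≤ n - 2) :
    G.degree (p i) = 2 :=
  h.2.2.2.2 i hi2 hi

theorem exists_index_of_adj (h : IsEscapePath G n p) {i : ℕ} {y : V} (hi2 : 2 ≤ i) (hin : i ≤ n)
    (hi : i ≠ n - 1) (hy : G.Adj (p i) y) :
    ∃ j ∈ Set.Icc 1 n, (j + 1 = i ∨ i + 1 = j) ∧ p j = y := by
  have hpred : G.Adj (p i) (p (i - 1)) := by
    have := h.adj_succ (i := i - 1) (by omega) (by omega)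
    rw [Nat.sub_add_cancel (by omega)] at this
    exact this.symm
  rcases eq_or_ne i n with rfl | hin'
  · exact ⟨i - 1, ⟨by omega, by omega⟩, Or.inl (by omega),
      (eq_of_adj_of_degree_eq_one h.degree_last hpred hy).symm⟩
  have hne : p (i - 1) ≠ p (i + 1) := fun he => by
    have := h.injOn ⟨by omega, by omega⟩ ⟨by omega, by omega⟩ he
    omega
  rcases eq_or_eq_of_adj_of_degree_eq_two (h.degree_eq_two hi2 (by omega)) hpred
    (h.adj_succ (by omega) (by omega)) hne hy with rfl | rfl
  · exact ⟨i - 1, ⟨by omega, by omega⟩, Or.inl (by omega), rfl⟩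
  · exact ⟨i + 1, ⟨by omega, by omega⟩, Or.inr rfl, rfl⟩

theorem adj_flipP_of_adj_flipP (h : IsEscapePath G n p) {i : ℕ} (hi : i ∈ Set.Icc 1 n)
    (hi2 : i ≠ 2) (hin : i ≠ n) {z : V} (hz : G.Adj (flipP n p (p i)) z) :
    G.Adj (p i) (flipP n p z) := by
  obtain ⟨hi1, hin'⟩ := hi
  rw [flipP_apply_of_injOn h.injOn ⟨hi1, hin'⟩] at hz
  obtain ⟨j, hj, hij, rfl⟩ :=
    h.exists_index_of_adj (i := n + 1 - i) (by omega) (by omega) (by omega) hz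
  obtain ⟨hj1, hjn⟩ := hj
  rw [flipP_apply_of_injOn h.injOn ⟨hj1, hjn⟩]
  rcases hij with hij | hij
  · rw [show n + 1 - j = i + 1 by omega]
    exact h.adj_succ hi1 (by omega)
  · have := h.adj_succ (i := i - 1) (by omega) (by omega)
    rw [Nat.sub_add_cancel hi1] at this
    rw [show n + 1 - j = i - 1 by omega]
    exact this.symm

theorem not_adj_flipP (h : IsEscapePath G n p) (hn : 2 ≤ n) {A : Set V} (hA : IndepSet G A)
    (h1 : p 1 ∈ A) {x y : V} (hx : x ∈ A) (hy : y ∈ A) :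
    ¬ G.Adj (flipP n p x) (flipP n p y) := by
  have hA' : ∀ a ∈ A, ∀ b ∈ A, ¬ G.Adj a b := fun a ha b hb hab => hA a ha b hb hab.ne hab
  have hp2 : p 2 ∉ A := fun h2 => hA' _ h1 _ h2 (h.adj_succ le_rfl hn)
  have hσ := flipP_involutive h.injOn
  have hpath : ∀ a ∈ A, ∀ b ∈ A, a ∈ p '' Set.Icc 1 n → ¬ G.Adj (flipP n p a) (flipP n p b) := by
    rintro a ha b hb ⟨i, hi, rfl⟩ hab
    have hi2 : i ≠ 2 := by rintro rfl; exact hp2 ha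
    by_cases hin : i = n
    · subst hin
      by_cases hb' : b ∈ p '' Set.Icc 1 i
      · obtain ⟨j, hj, rfl⟩ := hb'
        have hj2 : j ≠ 2 := by rintro rfl; exact hp2 hb
        have hjn : j ≠ i := by rintro rfl; exact hab.ne rfl
        have := h.adj_flipP_of_adj_flipP hj hj2 hjn hab.symm
        exact hA' _ hb _ ha (by rwa [hσ] at this)
      · rw [flipP_apply_of_injOn h.injOn hi, flipP_apply_of_notMem hb',
          Nat.add_sub_cancel_left] at hab
        exact hA' _ h1 _ hb hab
    · have := h.adj_flipP_of_adj_flipP hi hi2 hin hab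
      exact hA' _ ha _ hb (by rwa [hσ] at this)
  intro hxy
  by_cases hxP : x ∈ p '' Set.Icc 1 n
  · exact hpath x hx y hy hxP hxy
  by_cases hyP : y ∈ p '' Set.Icc 1 n
  · exact hpath y hy x hx hyP hxy.symm
  rw [flipP_apply_of_notMem hxP, flipP_apply_of_notMem hyP] at hxy
  exact hA' x hx y hy hxy

theorem card_star_le (h : IsEscapePath G n p) (k : ℕ) :
    #(star G k (p 1)) ≤ #(star G k (p n)) := by
  rcases h.one_le.eq_or_lt with rfl | hn
  · rfl
  have hσ := flipP_involutive h.injOn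
  refine card_le_card_of_injOn (fun A => A.image (flipP n p)) ?_
    (fun A _ B _ hAB => image_injective hσ.injective hAB)
  intro A hA
  simp only [_root_.star, mem_coe, mem_filter, mem_univ, true_and] at hA ⊢
  obtain ⟨hcard, h1, hind⟩ := hA
  refine ⟨by rw [card_image_of_injective _ hσ.injective, hcard], mem_image.mpr ⟨p 1, h1, ?_⟩, ?_⟩
  · rw [flipP_apply_of_injOn h.injOn ⟨le_rfl, hn.le⟩, Nat.add_sub_cancel]
  simp only [mem_image]
  rintro _ ⟨x, hx, rfl⟩ _ ⟨y, hy, rfl⟩ -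
  exact h.not_adj_flipP hn (A := ↑A) hind h1 hx hy

end IsEscapePath

theorem isEscapePath_update_of_adj_leaf [Fintype V] {G : SimpleGraph V} {n : ℕ} {p : ℕ → V}
    {ℓ : V} (hn : 1 ≤ n) (hinj : Set.InjOn p (Set.Icc 1 n))
    (hadj : ∀ i, 1 ≤ i → i < n → G.Adj (p i) (p (i + 1)))
    (hdeg : ∀ i, 2 ≤ i → i < n → G.degree (p i) = 2) (hℓ : G.Adj (p n) ℓ)
    (hℓdeg : G.degree ℓ = 1) (hℓp : ℓ ∉ p '' Set.Icc 1 n) :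
    IsEscapePath G (n + 1) (Function.update p (n + 1) ℓ) := by
  refine ⟨by omega, ?_, ?_, by rwa [Function.update_self], ?_⟩
  · rintro a ⟨ha1, ha⟩ b ⟨hb1, hb⟩ hab
    simp only [Function.update_apply] at hab
    split_ifs at hab with hau hbu hbu
    · omega
    · exact (hℓp ⟨b, ⟨hb1, by omega⟩, hab.symm⟩).elim
    · exact (hℓp ⟨a, ⟨ha1, by omega⟩, hab⟩).elim
    · exact hinj ⟨ha1, by omega⟩ ⟨hb1, by omega⟩ hab
  · intro i hi1 hi
    rw [Function.update_of_ne (by omega)]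
    rcases (Nat.lt_succ_iff.mp hi).eq_or_lt with rfl | hi
    · simpa using hℓ
    · rw [Function.update_of_ne (by omega : i + 1 ≠ n + 1)]
      exact hadj i hi1 hi
  · intro i hi2 hi
    rw [Function.update_of_ne (by omega)]
    exact hdeg i hi2 (by omega)

namespace SimpleGraph

open Finset

variable {G : SimpleGraph V}

section Spine

variable {S : Set V} {m : ℕ} (e : G.induce S ≃g pathGraph m) (hm : 0 < m)

/-- The vertex of `S` at position `k` of the path, positions beyond `m - 1` clamped to `m - 1`. -/
noncomputable def spine (k : ℕ) : V :=
  e.symm ⟨min k (m - 1), by omega⟩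

theorem spine_mem (k : ℕ) : spine e hm k ∈ S := (e.symm _).2

theorem spine_val (u : S) : spine e hm (e u) = u := by
  have : min ((e u : Fin m) : ℕ) (m - 1) = e u := min_eq_left (by omega)
  simp [spine, this]

theorem spine_injOn : Set.InjOn (spine e hm) (Set.Iic (m - 1)) := by
  intro a ha b hb hab
  have := e.symm.injective (Subtype.ext hab)
  simp only [Fin.mk.injEq] at this
  simp only [Set.mem_Iic] at ha hb
  omega

theorem spine_adj {k : ℕ} (hk : k + 1 ≤ m - 1) : G.Adj (spine e hm k) (spine e hm (k + 1)) := by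
  have : (pathGraph m).Adj ⟨min k (m - 1), by omega⟩ ⟨min (k + 1) (m - 1), by omega⟩ := by
    simp only [pathGraph_adj]
    omega
  exact e.symm.map_adj_iff.mpr this

theorem degree_spine [Fintype V] [DecidablePred (· ∈ S)] (k : ℕ) :
    G.degree (spine e hm k) = (pathGraph m).degree ⟨min k (m - 1), by omega⟩ +
      #{w ∈ G.neighborFinset (spine e hm k) | w ∉ S} := by
  rw [spine, degree_eq_degree_induce_add S, ← e.degree_eq, e.apply_symm_apply]

end Spine

section Caterpillar

variable [Fintype V] {m : ℕ} (e : G.induce {v | G.degree v ≠ 1} ≃g pathGraph m) (hm : 0 < m)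

theorem degree_spine_of_forall_adj_degree_ne_one {k : ℕ}
    (hno : ∀ ℓ, G.Adj (spine e hm k) ℓ → G.degree ℓ ≠ 1) :
    G.degree (spine e hm k) = (pathGraph m).degree ⟨min k (m - 1), by omega⟩ := by
  rw [degree_spine, add_eq_left, card_eq_zero, filter_eq_empty_iff]
  intro w hw
  simpa using hno w ((G.mem_neighborFinset _ _).mp hw)

theorem exists_adj_degree_eq_one_spine_last (hpos : ∀ v, 0 < G.degree v) :
    ∃ ℓ, G.Adj (spine e hm (m - 1)) ℓ ∧ G.degree ℓ = 1 := by
  by_contra! hno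
  have hdeg := degree_spine_of_forall_adj_degree_ne_one e hm hno
  have hpath := degree_pathGraph_le_one_of_last (m := m) ⟨min (m - 1) (m - 1), by omega⟩
    (by simp only [min_self]; omega)
  have hpos := hpos (spine e hm (m - 1))
  have hne : G.degree (spine e hm (m - 1)) ≠ 1 := spine_mem e hm (m - 1)
  omega

theorem degree_spine_eq_two {k : ℕ} (hk0 : 0 < k) (hk : k + 1 < m)
    (hno : ∀ ℓ, G.Adj (spine e hm k) ℓ → G.degree ℓ ≠ 1) : G.degree (spine e hm k) = 2 := by
  rw [degree_spine_of_forall_adj_degree_ne_one e hm hno]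
  exact degree_pathGraph_eq_two _ (by simp only; omega) (by simp only; omega)

end Caterpillar

theorem exists_isEscapePath_of_iso_pathGraph [Fintype V] {m : ℕ}
    (e : G.induce {v | G.degree v ≠ 1} ≃g pathGraph m) (hpos : ∀ v, 0 < G.degree v) {v : V}
    (hv : G.degree v ≠ 1) : ∃ n p, IsEscapePath G n p ∧ p 1 = v := by
  have hm : 0 < m := (e ⟨v, hv⟩).pos
  set j : ℕ := (e ⟨v, hv⟩).val with hj
  have hjm : j < m := (e ⟨v, hv⟩).isLt
  have hex : ∃ k, j ≤ k ∧ k ≤ m - 1 ∧ ∃ ℓ, G.Adj (spine e hm k) ℓ ∧ G.degree ℓ = 1 :=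
    ⟨m - 1, by omega, le_rfl, exists_adj_degree_eq_one_spine_last e hm hpos⟩
  obtain ⟨hjt, htm, ℓ, htℓ, hℓ⟩ := Nat.find_spec hex
  set t := Nat.find hex
  set q : ℕ → V := fun i => spine e hm (j + i - 1) with hq
  refine ⟨t - j + 1 + 1, Function.update q (t - j + 1 + 1) ℓ,
    isEscapePath_update_of_adj_leaf (by omega) ?_ ?_ ?_ ?_ hℓ ?_, ?_⟩
  · rintro a ⟨ha1, ha⟩ b ⟨hb1, hb⟩ hab
    have := spine_injOn e hm (show j + a - 1 ≤ m - 1 by omega)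
      (show j + b - 1 ≤ m - 1 by omega) hab
    omega
  · intro i hi1 hi
    simpa [hq, show j + (i + 1) - 1 = j + i - 1 + 1 by omega] using
      spine_adj e hm (k := j + i - 1) (by omega)
  · intro i hi2 hi
    refine degree_spine_eq_two e hm (by omega) (by omega) fun ℓ' hℓ' hℓ'1 => ?_
    exact Nat.find_min hex (m := j + i - 1) (by omega) ⟨by omega, by omega, ℓ', hℓ', hℓ'1⟩
  · simpa [hq, show j + (t - j + 1) - 1 = t by omega] using htℓ
  · rintro ⟨i, -, hi⟩
    have hmem := spine_mem e hm (j + i - 1)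
    rw [show spine e hm (j + i - 1) = ℓ from hi] at hmem
    exact hmem hℓ
  · rw [Function.update_of_ne (by omega)]
    simpa [hq, hj] using spine_val e hm ⟨v, hv⟩

end SimpleGraph

open SimpleGraph Finset in
/-- in a caterpillar, every vertex is a leaf or has an escape path
to a leaf; hence for each `k` the maximum of `|I^k(v)|` over all vertices is
attained at a leaf. -/
theorem caterpillar_leaf_or_escapePath_and_max_at_leaf [Fintype V]
    (G : SimpleGraph V) (hG : IsCaterpillar G) :
    (∀ v : V, G.degree v = 1 ∨
        ∃ (n : ℕ) (p : ℕ → V) (ℓ : V), G.degree ℓ = 1 ∧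
          IsEscapePath G n p ∧ p 1 = v ∧ p n = ℓ) ∧
      ∀ k : ℕ, ∃ ℓ : V, G.degree ℓ = 1 ∧
        ∀ v : V, (star G k v).card ≤ (star G k ℓ).card := by
  obtain ⟨htree, hcard, m, ⟨e⟩⟩ := hG
  have : Nontrivial V := Fintype.one_lt_card_iff_nontrivial.mp hcard
  have hpos : ∀ v, 0 < G.degree v := fun v =>
    htree.connected.preconnected.degree_pos_of_nontrivial v
  have hescape : ∀ v, G.degree v ≠ 1 → ∃ n p, IsEscapePath G n p ∧ p 1 = v :=
    fun v hv => exists_isEscapePath_of_iso_pathGraph e hpos hv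
  refine ⟨fun v => or_iff_not_imp_left.mpr fun hv => ?_, fun k => ?_⟩
  · obtain ⟨n, p, hp, rfl⟩ := hescape v hv
    exact ⟨n, p, p n, hp.degree_last, hp, rfl, rfl⟩
  obtain ⟨v, -, hv⟩ := exists_max_image univ (fun v => #(star G k v)) univ_nonempty
  by_cases hv1 : G.degree v = 1
  · exact ⟨v, hv1, fun w => hv w (mem_univ w)⟩
  obtain ⟨n, p, hp, rfl⟩ := hescape v hv1
  exact ⟨p n, hp.degree_last, fun w => (hv w (mem_univ w)).trans (hp.card_star_le k)⟩
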